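/- Let v > 1 be an odd positive integer that is not a prime power and not a perfect square. Then there is no Paley type partial difference set in any abelian group of order v. -/

import Mathlib

/-- `D` is a `(v,k,λ,μ)`-partial difference set in the finite abelian group `G`:
`|G| = v`, `|D| = k`, and every non-identity element `g` of `G` is represented
as `a * b⁻¹` with `a, b ∈ D`, `a ≠ b`, exactly `λ` times if `g ∈ D` and exactly
`μ` times otherwise. -/
def IsPDS {G : Type*} [CommGroup G] [Fintype G] [DecidableEq G]
    (D : Finset G) (v k l m : ℕ) : Prop :=
  Fintype.card G = v ∧ D.card = k ∧
  ∀ g : G, g ≠ 1 →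
    ((D ×ˢ D).filter (fun p => p.1 ≠ p.2 ∧ p.1 * p.2⁻¹ = g)).card
      = if g ∈ D then l else m

/-- A regular PDS: a PDS that is inverse-closed and avoids the identity. -/
def IsRegularPDS {G : Type*} [CommGroup G] [Fintype G] [DecidableEq G]
    (D : Finset G) (v k l m : ℕ) : Prop :=
  IsPDS D v k l m ∧ (∀ g ∈ D, g⁻¹ ∈ D) ∧ (1 : G) ∉ D

/-- A Paley type PDS: a regular PDS with parameters
`(v, (v-1)/2, (v-5)/4, (v-1)/4)` where `v = |G|`. -/
def IsPaleyPDS {G : Type*} [CommGroup G] [Fintype G] [DecidableEq G]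
    (D : Finset G) : Prop :=
  IsRegularPDS D (Fintype.card G) ((Fintype.card G - 1) / 2)
    ((Fintype.card G - 5) / 4) ((Fintype.card G - 1) / 4)

/-!
Counting the quotients `a * b⁻¹` of distinct elements of `D` gives `k(k - 1) = λk + μ(v - 1 - k)`,
which for Paley parameters forces `v ≡ 1 (mod 4)` once `v ≠ 3`. For a nontrivial character `ψ`
of `G` into a domain, `D = D⁻¹` makes `ψ(D)²` the character of `D·D = k + λD + μ(G - 1 - D)`, and
as `ψ(G) = 0` this reads `ψ(D)² = t - ψ(D)` with `v = 4t + 1`, i.e. `(2ψ(D) + 1)² = v`.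

Since `v` is not a square, some prime `q` divides it to an odd power `α`, and since `v` is not a
prime power, `w = v / q^α > 1`. Dirichlet's theorem gives a prime `ℓ ≡ 1 (mod 4w)` that is a
non-residue mod `q`, so `(v/ℓ) = (ℓ/v) = (ℓ/q)^α (ℓ/w) = -1`. But `G` modulo a Sylow `q`-subgroup
has order `w ∣ ℓ - 1`, hence a nontrivial character into `ZMod ℓ`, which makes `v` a square mod `ℓ`.
-/

open Finset Pointwise

section PartialDifferenceSet

variable {G : Type*} [CommGroup G] [Fintype G] [DecidableEq G] {M : Type*} [AddCommMonoid M]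

lemma Finset.sum_offDiag_mul_inv (D : Finset G) (f : G → M) :
    ∑ p ∈ D.offDiag, f (p.1 * p.2⁻¹) =
      ∑ g ∈ univ.erase 1, #{p ∈ D ×ˢ D | p.1 ≠ p.2 ∧ p.1 * p.2⁻¹ = g} • f g := by
  have hmaps : ∀ p ∈ D.offDiag, p.1 * p.2⁻¹ ∈ univ.erase (1 : G) := fun p hp ↦ by
    simpa [mul_inv_eq_one] using (mem_offDiag.1 hp).2.2
  rw [← sum_fiberwise_of_maps_to' hmaps]
  refine sum_congr rfl fun g _ ↦ ?_
  rw [sum_const]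
  congr 2
  ext p
  simp only [mem_filter, mem_offDiag, mem_product]
  tauto

variable {D : Finset G} {v k l m : ℕ}

lemma IsPDS.sum_offDiag_mul_inv (hD : IsPDS D v k l m) (h1 : (1 : G) ∉ D) (f : G → M) :
    ∑ p ∈ D.offDiag, f (p.1 * p.2⁻¹) = l • ∑ g ∈ D, f g + m • ∑ g ∈ Dᶜ.erase 1, f g := by
  rw [Finset.sum_offDiag_mul_inv, ← sum_filter_add_sum_filter_not _ (· ∈ D)]
  have hin : {g ∈ univ.erase (1 : G) | g ∈ D} = D := by
    ext g; simp only [mem_filter, mem_erase, mem_univ]; grind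
  have hout : {g ∈ univ.erase (1 : G) | g ∉ D} = Dᶜ.erase 1 := by
    ext g; simp only [mem_filter, mem_erase, mem_univ, mem_compl]; tauto
  rw [hin, hout, smul_sum, smul_sum]
  congr 1 <;> refine sum_congr rfl fun g hg ↦ ?_
  · rw [hD.2.2 g (ne_of_mem_of_not_mem hg h1), if_pos hg]
  · rw [mem_erase, mem_compl] at hg
    rw [hD.2.2 g hg.1, if_neg hg.2]

lemma IsPDS.mul_self_sub_self_eq (hD : IsPDS D v k l m) (h1 : (1 : G) ∉ D) :
    k * k - k = l * k + m * (v - k - 1) := by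
  have h := hD.sum_offDiag_mul_inv h1 (fun _ ↦ 1)
  have hcompl : #(Dᶜ.erase 1) = v - k - 1 := by
    rw [card_erase_of_mem (mem_compl.2 h1), card_compl, hD.1, hD.2.1]
  simpa only [sum_const, offDiag_card, hD.2.1, smul_eq_mul, mul_one, hcompl] using h

lemma IsRegularPDS.charSum_sq {R : Type*} [CommRing R] [IsDomain R] (hD : IsRegularPDS D v k l m)
    (ψ : G →* R) (hψ : ψ ≠ 1) :
    (∑ g ∈ D, ψ g) ^ 2 = k + l * ∑ g ∈ D, ψ g + m * (-1 - ∑ g ∈ D, ψ g) := by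
  obtain ⟨hPDS, hinv, h1⟩ := hD
  have hDinv : D⁻¹ = D := by
    ext g; rw [mem_inv']; exact ⟨fun h ↦ inv_inv g ▸ hinv _ h, hinv g⟩
  have hdiag : ∑ p ∈ D.diag, ψ (p.1 * p.2⁻¹) = k := by
    simp only [diag, sum_map, Function.Embedding.coeFn_mk, Function.diag, mul_inv_cancel, map_one,
      sum_const, nsmul_one, hPDS.2.1]
  have hcompl : ∑ g ∈ Dᶜ.erase 1, ψ g = -1 - ∑ g ∈ D, ψ g := by
    have htot := sum_add_sum_compl D ψ
    rw [sum_hom_units_eq_zero ψ hψ, ← add_sum_erase _ _ (mem_compl.2 h1), map_one] at htot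
    linear_combination htot
  calc (∑ g ∈ D, ψ g) ^ 2 = ∑ p ∈ D ×ˢ D, ψ (p.1 * p.2⁻¹) := by
        rw [sq]
        nth_rw 2 [← hDinv]
        rw [sum_inv_index, sum_mul_sum, ← sum_product']
        simp only [map_mul]
    _ = _ := by
        rw [← diag_union_offDiag, sum_union (disjoint_diag_offDiag D), hdiag,
          hPDS.sum_offDiag_mul_inv h1, hcompl, nsmul_eq_mul, nsmul_eq_mul, add_assoc]

end PartialDifferenceSet

section Paley

variable {G : Type*} [CommGroup G] [Fintype G] [DecidableEq G] {D : Finset G}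

lemma IsPaleyPDS.card_mod_four (hD : IsPaleyPDS D) (hodd : Odd (Fintype.card G))
    (h3 : Fintype.card G ≠ 3) : Fintype.card G % 4 = 1 := by
  have hodd4 := Nat.odd_iff.1 hodd
  by_contra h
  obtain ⟨s, hs⟩ : ∃ s, Fintype.card G = 4 * s + 7 := ⟨Fintype.card G / 4 - 1, by omega⟩
  have hcount := hD.1.mul_self_sub_self_eq hD.2.2
  rw [hs, show (4 * s + 7 - 1) / 2 = 2 * s + 3 by omega, show (4 * s + 7 - 5) / 4 = s by omega,
    show (4 * s + 7 - 1) / 4 = s + 1 by omega, show 4 * s + 7 - (2 * s + 3) - 1 = 2 * s + 3 by omega,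
    ← Nat.mul_sub_one, show 2 * s + 3 - 1 = 2 * s + 2 by omega] at hcount
  nlinarith

lemma IsPaleyPDS.two_mul_charSum_add_one_sq {R : Type*} [CommRing R] [IsDomain R]
    (hD : IsPaleyPDS D) (h4 : Fintype.card G % 4 = 1) (ψ : G →* R) (hψ : ψ ≠ 1) :
    (2 * ∑ g ∈ D, ψ g + 1) ^ 2 = Fintype.card G := by
  obtain ⟨t, ht⟩ : ∃ t, Fintype.card G = 4 * t + 1 := ⟨Fintype.card G / 4, by omega⟩
  have h := hD.charSum_sq ψ hψ
  rcases t with _ | t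
  · have hD0 : D = ∅ := card_eq_zero.1 (by rw [hD.1.2.1, ht])
    simp [hD0, ht]
  · rw [ht, show (4 * (t + 1) + 1 - 1) / 2 = 2 * t + 2 by omega,
      show (4 * (t + 1) + 1 - 5) / 4 = t by omega, show (4 * (t + 1) + 1 - 1) / 4 = t + 1 by omega] at h
    rw [ht]
    push_cast at h ⊢
    linear_combination 4 * h

end Paley

lemma Nat.exists_prime_odd_factorization_of_not_isSquare {v : ℕ} (hv : v ≠ 0)
    (hsq : ¬ IsSquare v) : ∃ q, q.Prime ∧ Odd (v.factorization q) := by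
  obtain ⟨a, b, rfl, ha⟩ := Nat.sq_mul_squarefree v
  have ha1 : a ≠ 1 := by rintro rfl; exact hsq ⟨b, by ring⟩
  obtain ⟨hb0, ha0⟩ : b ^ 2 ≠ 0 ∧ a ≠ 0 := by simpa [not_or] using hv
  have hq := Nat.minFac_prime ha1
  have hfa : a.factorization a.minFac = 1 :=
    (ha.natFactorization_le_one _).antisymm (hq.factorization_pos_of_dvd ha0 a.minFac_dvd)
  refine ⟨a.minFac, hq, ?_⟩
  rw [Nat.factorization_mul hb0 ha0, Finsupp.add_apply, Nat.factorization_pow, hfa]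
  exact ⟨b.factorization a.minFac, by simp⟩

lemma Nat.one_lt_ordCompl_of_not_isPrimePow {v q : ℕ} (hq : q.Prime) (hv : 1 < v)
    (hpp : ¬ IsPrimePow v) : 1 < ordCompl[q] v := by
  have h := Nat.ordProj_mul_ordCompl_eq_self v q
  have h0 := (Nat.ordCompl_pos q (by omega : v ≠ 0)).ne'
  by_contra! hle
  rw [hle.antisymm (Nat.one_le_iff_ne_zero.2 h0), mul_one] at h
  refine hpp ⟨q, _, hq.prime, Nat.pos_of_ne_zero fun h' ↦ ?_, h⟩
  rw [h', pow_zero] at h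
  omega

lemma exists_prime_modEq_one_and_not_isSquare {q n : ℕ} [Fact q.Prime] (hq2 : q ≠ 2)
    (hn0 : n ≠ 0) (hn : n.Coprime q) :
    ∃ ℓ, ℓ.Prime ∧ ℓ ≡ 1 [MOD n] ∧ ¬ IsSquare (ℓ : ZMod q) := by
  obtain ⟨b, hb⟩ := FiniteField.exists_nonsquare (F := ZMod q) (by rwa [ZMod.ringChar_zmod_n])
  obtain ⟨c, hc1, hcb⟩ := Nat.chineseRemainder hn 1 b.val
  have hcq : (c : ZMod q) = b := by
    rw [(ZMod.natCast_eq_natCast_iff c b.val q).2 hcb, ZMod.natCast_zmod_val]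
  have hcop : c.Coprime (n * q) := by
    refine Nat.Coprime.mul_right ?_ ?_
    · simpa [Nat.Coprime, Nat.gcd_comm] using hc1.gcd_eq
    · refine (Nat.coprime_comm.1 ((Nat.Prime.coprime_iff_not_dvd Fact.out).2 fun hqc ↦ hb ?_))
      rw [← hcq, (ZMod.natCast_eq_zero_iff c q).2 hqc]
      exact ⟨0, by ring⟩
  obtain ⟨ℓ, -, hℓ, hℓc⟩ :=
    Nat.forall_exists_prime_gt_and_modEq 0 (mul_ne_zero hn0 (Fact.out : q.Prime).ne_zero) hcop
  refine ⟨ℓ, hℓ, (Nat.ModEq.of_mul_right q hℓc).trans hc1, ?_⟩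
  rwa [(ZMod.natCast_eq_natCast_iff ℓ c q).2 (Nat.ModEq.of_mul_left n hℓc), hcq]

lemma jacobiSym_eq_neg_one_of_odd_factorization {v q ℓ : ℕ} [Fact q.Prime] (hv : Odd v)
    (hα : Odd (v.factorization q)) (hℓ : ℓ ≡ 1 [MOD 4 * ordCompl[q] v])
    (hℓq : ¬ IsSquare (ℓ : ZMod q)) : jacobiSym v ℓ = -1 := by
  have hv0 : v ≠ 0 := by rintro rfl; exact Nat.not_odd_zero hv
  have hℓ4 : ℓ % 4 = 1 := Nat.ModEq.of_mul_right _ hℓ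
  have hℓw : (ℓ : ℤ) % (ordCompl[q] v : ℕ) = 1 % (ordCompl[q] v : ℕ) := by
    exact_mod_cast Nat.ModEq.of_mul_left 4 hℓ
  rw [jacobiSym.quadratic_reciprocity_one_mod_four' hv hℓ4, ← Nat.ordProj_mul_ordCompl_eq_self v q,
    jacobiSym.mul_right' _ (pow_ne_zero _ (Fact.out : q.Prime).ne_zero)
      (Nat.ordCompl_pos q hv0).ne', jacobiSym.pow_right,
    ZMod.nonsquare_iff_jacobiSym_eq_neg_one.2 (by exact_mod_cast hℓq), jacobiSym.mod_left' hℓw,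
    jacobiSym.one_left, mul_one, hα.neg_one_pow]

lemma exists_prime_not_isSquare_of_odd_factorization {v q : ℕ} (hv : Odd v) (hq : q.Prime)
    (hα : Odd (v.factorization q)) :
    ∃ ℓ, ℓ.Prime ∧ ordCompl[q] v ∣ ℓ - 1 ∧ ¬ IsSquare (v : ZMod ℓ) := by
  have := Fact.mk hq
  have hv0 : v ≠ 0 := by rintro rfl; exact Nat.not_odd_zero hv
  have hqv : q ∣ v := Nat.dvd_of_factorization_pos (by rintro h; simp [h] at hα)
  have hq2 : q ≠ 2 := by rintro rfl; exact Nat.not_even_iff_odd.2 hv (even_iff_two_dvd.2 hqv)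
  have hcop : (4 * ordCompl[q] v).Coprime q := by
    refine Nat.Coprime.mul_left ?_ (Nat.coprime_comm.1 (Nat.coprime_ordCompl hq hv0))
    exact Nat.Coprime.pow_left 2 ((Nat.coprime_primes Nat.prime_two hq).2 hq2.symm)
  obtain ⟨ℓ, hℓ, hℓ1, hℓq⟩ := exists_prime_modEq_one_and_not_isSquare hq2
    (mul_ne_zero four_ne_zero (Nat.ordCompl_pos q hv0).ne') hcop
  refine ⟨ℓ, hℓ, ?_, ?_⟩
  · exact (Nat.modEq_iff_dvd' hℓ.one_le).1 (Nat.ModEq.of_mul_left 4 hℓ1).symm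
  · simpa using ZMod.nonsquare_of_jacobiSym_eq_neg_one
      (jacobiSym_eq_neg_one_of_odd_factorization hv hα hℓ1 hℓq)

lemma Sylow.index_eq_ordCompl {G : Type*} [Group G] [Finite G] {p : ℕ} [Fact p.Prime]
    (P : Sylow p G) : (P : Subgroup G).index = ordCompl[p] (Nat.card G) := by
  have h := P.index_mul_card
  rw [P.card_eq_multiplicity] at h
  exact Nat.eq_div_of_mul_eq_left (pow_ne_zero _ (Fact.out : p.Prime).ne_zero) h

lemma Subgroup.exists_monoidHom_ne_one_of_index_dvd {G M : Type*} [CommGroup G] [Finite G]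
    [CommMonoid M] {n : ℕ} [NeZero n] [HasEnoughRootsOfUnity M n] {H : Subgroup G}
    (hH : H ≠ ⊤) (hdvd : H.index ∣ n) : ∃ ψ : G →* M, ψ ≠ 1 := by
  have : HasEnoughRootsOfUnity M (Monoid.exponent (G ⧸ H)) :=
    .of_dvd M (Group.exponent_dvd_nat_card.trans (H.index_eq_card ▸ hdvd))
  have : Nontrivial (G ⧸ H) := QuotientGroup.nontrivial_iff.2 hH
  obtain ⟨a, ha⟩ := exists_ne (1 : G ⧸ H)
  obtain ⟨φ, hφ⟩ := CommGroup.exists_apply_ne_one_of_hasEnoughRootsOfUnity (G ⧸ H) M ha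
  obtain ⟨g, rfl⟩ := QuotientGroup.mk'_surjective H a
  refine ⟨(Units.coeHom M).comp (φ.comp (QuotientGroup.mk' H)), fun h ↦ hφ (Units.ext ?_)⟩
  simpa using DFunLike.congr_fun h g

theorem stmt9 (v : ℕ) (h1 : 1 < v) (hodd : Odd v)
    (hpp : ¬ IsPrimePow v) (hsq : ¬ IsSquare v) :
    ∀ (G : Type) [CommGroup G] [Fintype G] [DecidableEq G],
      Fintype.card G = v → ∀ D : Finset G, ¬ IsPaleyPDS D := by
  intro G _ _ _ hcard D hD
  have h4 : Fintype.card G % 4 = 1 :=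
    hD.card_mod_four (hcard ▸ hodd) fun h3 ↦ hpp (hcard ▸ h3 ▸ Nat.prime_three.isPrimePow)
  obtain ⟨q, hq, hα⟩ := Nat.exists_prime_odd_factorization_of_not_isSquare (by omega) hsq
  obtain ⟨ℓ, hℓ, hdvd, hns⟩ := exists_prime_not_isSquare_of_odd_factorization hodd hq hα
  have := Fact.mk hq
  have := Fact.mk hℓ
  have : NeZero (ℓ - 1) := ⟨by have := hℓ.two_le; omega⟩
  obtain ⟨P⟩ := Sylow.nonempty (p := q) (G := G)
  have hindex : (P : Subgroup G).index = ordCompl[q] v := by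
    rw [P.index_eq_ordCompl, Nat.card_eq_fintype_card, hcard]
  have hPtop : (P : Subgroup G) ≠ ⊤ := by
    rw [Ne, ← Subgroup.index_eq_one, hindex]
    exact (Nat.one_lt_ordCompl_of_not_isPrimePow hq h1 hpp).ne'
  obtain ⟨ψ, hψ⟩ := Subgroup.exists_monoidHom_ne_one_of_index_dvd (M := ZMod ℓ) hPtop
    (hindex ▸ hdvd)
  refine hns ⟨2 * ∑ g ∈ D, ψ g + 1, ?_⟩
  rw [← sq, hD.two_mul_charSum_add_one_sq h4 ψ hψ, hcard]
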